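/- Let (d_n)_{n∈ℕ} be a sequence of integers with d_n ≥ 1 and let (F_n)_{n∈ℕ} be a sequence of finite fields. For each n, let M_n be the additive group of all 4d_n × 4d_n matrices over F_n, equipped with the action of the group SL(4d_n, F_n) given by left multiplication, S ↦ AS. Then the full direct product ∏_{n∈ℕ} M_n is finitely generated as a module over ∏_{n∈ℕ} SL(4d_n, F_n) acting coordinatewise: there exist finitely many elements m_1, …, m_k ∈ ∏_n M_n such that the smallest additive subgroup of ∏_n M_n containing m_1, …, m_k and closed under the action of every element of ∏_n SL(4d_n, F_n) is all of ∏_n M_n. -/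

import Mathlib

/-!
The constant family `1` generates: a subgroup stable under the action contains `g • 1 = g` for
every `g`, and every square matrix of even size over a field is a sum of two matrices of
determinant one. For the latter, split the matrix into `2 × 2` blocks, put its part above the
block diagonal into one summand and the part below into the other, and choose the diagonal blocks
by a `2 × 2` computation; both summands are then block triangular.
-/

namespace Matrix

variable {F : Type*} [Field F]

theorem exists_det_eq_one_and_det_sub_eq_one (Y : Matrix (Fin 2) (Fin 2) F) :
    ∃ P : Matrix (Fin 2) (Fin 2) F, P.det = 1 ∧ (Y - P).det = 1 := by
  -- With off-diagonal entries `-1, 1`, `det P = 1` whatever the free diagonal entry `t` is,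
  -- while `det (Y - P)` is affine in `t` with slope `-Y 1 1` (resp. `-Y 0 0`).
  by_cases h₁₁ : Y 1 1 = 0
  · by_cases h₀₀ : Y 0 0 = 0
    · refine ⟨!![1, Y 0 1; 0, 1], by simp [det_fin_two_of], ?_⟩
      simp [det_fin_two, h₀₀, h₁₁]
    · refine ⟨!![0, -1; 1, Y 1 1 - (1 + (Y 0 1 + 1) * (Y 1 0 - 1)) / Y 0 0],
        by simp [det_fin_two_of], ?_⟩
      simp only [Fin.isValue, det_fin_two, sub_apply, of_apply, cons_val', cons_val_zero,
        cons_val_fin_one, sub_zero, cons_val_one, sub_sub_cancel, sub_neg_eq_add]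
      field_simp
      ring
  · refine ⟨!![Y 0 0 - (1 + (Y 0 1 + 1) * (Y 1 0 - 1)) / Y 1 1, -1; 1, 0],
      by simp [det_fin_two_of], ?_⟩
    simp only [Fin.isValue, det_fin_two, sub_apply, of_apply, cons_val', cons_val_zero,
      cons_val_fin_one, sub_sub_cancel, cons_val_one, sub_zero, sub_neg_eq_add]
    field_simp
    ring

variable {ι κ R : Type*} [Fintype ι] [DecidableEq ι] [Fintype κ] [DecidableEq κ] [CommRing R]

theorem det_toSquareBlock_fst (M : Matrix (ι × κ) (ι × κ) R) (i : ι) :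
    (M.toSquareBlock Prod.fst i).det = (M.submatrix (Prod.mk i) (Prod.mk i)).det := by
  let e : κ ≃ { p : ι × κ // p.1 = i } :=
    { toFun := fun k => ⟨(i, k), rfl⟩
      invFun := fun p => p.1.2
      left_inv := fun _ => rfl
      right_inv := fun ⟨p, hp⟩ => by subst hp; rfl }
  rw [← det_submatrix_equiv_self e]
  rfl

theorem BlockTriangular.det_eq_prod_submatrix_fst [LinearOrder ι]
    {M : Matrix (ι × κ) (ι × κ) R} (hM : M.BlockTriangular Prod.fst) :
    M.det = ∏ i, (M.submatrix (Prod.mk i) (Prod.mk i)).det := by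
  simp_rw [hM.det_fintype, det_toSquareBlock_fst]

namespace SpecialLinearGroup

theorem exists_add_eq_of_index_prod_fin_two [LinearOrder ι]
    (X : Matrix (ι × Fin 2) (ι × Fin 2) F) :
    ∃ A B : SpecialLinearGroup (ι × Fin 2) F, (A : Matrix (ι × Fin 2) (ι × Fin 2) F) + B = X := by
  choose P hP hXP using fun i =>
    exists_det_eq_one_and_det_sub_eq_one (X.submatrix (Prod.mk i) (Prod.mk i))
  -- `A` takes the part of `X` above the diagonal blocks and `P i` on them, so `X - A` is lower
  -- block triangular with the blocks `X_ii - P i`.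
  let A : Matrix (ι × Fin 2) (ι × Fin 2) F := of fun p q =>
    if p.1 = q.1 then P p.1 p.2 q.2 else if p.1 < q.1 then X p q else 0
  have hA : A.BlockTriangular Prod.fst := fun p q hqp => by
    simp [A, hqp.ne', hqp.not_gt]
  have hXA : (X - A)ᵀ.BlockTriangular Prod.fst := fun p q hqp => by
    simp [A, hqp.ne, hqp]
  have hAdet : A.det = 1 := by
    rw [hA.det_eq_prod_submatrix_fst]
    refine Finset.prod_eq_one fun i _ => ?_
    convert hP i using 2
    ext a b
    simp [A]
  have hXAdet : (X - A).det = 1 := by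
    rw [← det_transpose, hXA.det_eq_prod_submatrix_fst]
    refine Finset.prod_eq_one fun i _ => ?_
    rw [← transpose_submatrix, det_transpose]
    convert hXP i using 2
    ext a b
    simp [A]
  exact ⟨⟨A, hAdet⟩, ⟨X - A, hXAdet⟩, add_sub_cancel A X⟩

theorem exists_add_eq_of_even_card {n : Type*} [Fintype n] [DecidableEq n]
    (hn : Even (Fintype.card n)) (X : Matrix n n F) :
    ∃ A B : SpecialLinearGroup n F, (A : Matrix n n F) + B = X := by
  obtain ⟨k, hk⟩ := hn
  let e : n ≃ Fin k × Fin 2 :=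
    (Fintype.equivFinOfCardEq (by omega : Fintype.card n = k * 2)).trans finProdFinEquiv.symm
  obtain ⟨A, B, hAB⟩ := exists_add_eq_of_index_prod_fin_two (reindex e e X)
  refine ⟨⟨reindex e.symm e.symm A, by simp⟩, ⟨reindex e.symm e.symm B, by simp⟩, ?_⟩
  ext i j
  simpa using congrFun₂ hAB (e i) (e j)

end SpecialLinearGroup

end Matrix

theorem stmt_16_general (d : ℕ → ℕ) (F : ℕ → Type*)
    [∀ n, Field (F n)] :
    ∃ (k : ℕ) (m : Fin k → ∀ n, Matrix (Fin (4 * d n)) (Fin (4 * d n)) (F n)),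
      ∀ A : AddSubgroup (∀ n, Matrix (Fin (4 * d n)) (Fin (4 * d n)) (F n)),
        (∀ i, m i ∈ A) →
        (∀ (g : ∀ n, Matrix.SpecialLinearGroup (Fin (4 * d n)) (F n))
            (x : ∀ n, Matrix (Fin (4 * d n)) (Fin (4 * d n)) (F n)), x ∈ A →
            (fun n => (g n : Matrix (Fin (4 * d n)) (Fin (4 * d n)) (F n)) * x n) ∈ A) →
        ∀ x : ∀ n, Matrix (Fin (4 * d n)) (Fin (4 * d n)) (F n), x ∈ A := by
  refine ⟨1, fun _ _ => 1, fun A hm hact x => ?_⟩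
  choose g h hgh using fun n =>
    Matrix.SpecialLinearGroup.exists_add_eq_of_even_card
      (by rw [Fintype.card_fin]; exact ⟨2 * d n, by ring⟩) (x n)
  have hsum := A.add_mem (hact g _ (hm 0)) (hact h _ (hm 0))
  simp only [mul_one] at hsum
  convert hsum using 1
  exact funext fun n => (hgh n).symm

/-- `∏ n, Mₙ` (with `Mₙ` the additive group of `4dₙ × 4dₙ` matrices over `Fₙ`) is finitely
generated as a module over `∏ n, SL(4dₙ, Fₙ)` acting coordinatewise by left
multiplication: there are finitely many elements such that the smallest additive subgroup
containing them and closed under the action is everything. -/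
theorem stmt_16 (d : ℕ → ℕ) (hd : ∀ n, 1 ≤ d n) (F : ℕ → Type*)
    [∀ n, Field (F n)] [∀ n, Fintype (F n)] :
    ∃ (k : ℕ) (m : Fin k → ∀ n, Matrix (Fin (4 * d n)) (Fin (4 * d n)) (F n)),
      ∀ A : AddSubgroup (∀ n, Matrix (Fin (4 * d n)) (Fin (4 * d n)) (F n)),
        (∀ i, m i ∈ A) →
        (∀ (g : ∀ n, Matrix.SpecialLinearGroup (Fin (4 * d n)) (F n))
            (x : ∀ n, Matrix (Fin (4 * d n)) (Fin (4 * d n)) (F n)), x ∈ A →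
            (fun n => (g n : Matrix (Fin (4 * d n)) (Fin (4 * d n)) (F n)) * x n) ∈ A) →
        ∀ x : ∀ n, Matrix (Fin (4 * d n)) (Fin (4 * d n)) (F n), x ∈ A :=
  stmt_16_general d F
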